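/- Let 𝒳 be a factorization of a digraph G, let W be a resolving set of G, and let X_i ∈ 𝒳 be a module with at least two vertices. Then for all distinct x,y ∈ X_i there exists w ∈ W ∩ X_i with dist_G(w,x) ≠ dist_G(w,y). In particular W ∩ X_i ≠ ∅. -/

import Mathlib

open Classical

variable {V : Type*}

/-- There is a directed walk of length `m` from `x` to `y` in the digraph with arc relation `A`. -/
def HasDWalk {V : Type*} (A : V → V → Prop) (x y : V) (m : ℕ) : Prop :=
  ∃ f : Fin (m + 1) → V, f 0 = x ∧ f (Fin.last m) = y ∧
    ∀ i : Fin m, A (f i.castSucc) (f i.succ)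

/-- `y` is reachable from `x` by a directed path. -/
def DReachable {V : Type*} (A : V → V → Prop) (x y : V) : Prop :=
  ∃ m : ℕ, HasDWalk A x y m

/-- Directed distance: length of a shortest directed path, `⊤` if none exists. -/
noncomputable def ddist {V : Type*} (A : V → V → Prop) (x y : V) : ℕ∞ :=
  sInf {n : ℕ∞ | ∃ m : ℕ, n = (m : ℕ∞) ∧ HasDWalk A x y m}

/-- A resolving set: every vertex is reachable from the set, and every pair of
distinct vertices is distinguished by distance from some vertex of the set. -/
def IsResolvingSet {V : Type*} (A : V → V → Prop) (S : Set V) : Prop :=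
  (∀ v : V, ∃ s ∈ S, DReachable A s v) ∧
  ∀ v w : V, v ≠ w → ∃ s ∈ S, ddist A s v ≠ ddist A s w

/-- `X` is a module: every vertex outside `X` relates uniformly to all vertices of `X`. -/
def IsModule {V : Type*} (A : V → V → Prop) (X : Set V) : Prop :=
  ∀ v ∉ X, ∀ x ∈ X, ∀ y ∈ X, (A v x ↔ A v y) ∧ (A x v ↔ A y v)

/-- A factorization: a partition of the vertex set into (nonempty) modules. -/
def IsFactorization {V ι : Type*} (A : V → V → Prop) (X : ι → Set V) : Prop :=
  (∀ i, (X i).Nonempty) ∧ (Pairwise fun i j => Disjoint (X i) (X j)) ∧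
  (⋃ i, X i) = Set.univ ∧ ∀ i, IsModule A (X i)

/-- The quotient digraph of a factorization: an arc from module `i` to module `j`
(`i ≠ j`) iff there is an arc from a vertex of `X i` to a vertex of `X j`. -/
def quotientAdj {V ι : Type*} (A : V → V → Prop) (X : ι → Set V) (i j : ι) : Prop :=
  i ≠ j ∧ ∃ x ∈ X i, ∃ y ∈ X j, A x y

/-!
A vertex `w` outside a module `X` sees all vertices of `X` at the same distance: a walk from `w`
into `X` can be redirected, at its first arc entering `X`, to any other vertex of `X`, without
getting longer. Hence a pair of distinct vertices of `X` can only be resolved by vertices of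
`W` lying in `X`, and if `X` has two vertices then `W` meets `X`.
-/

theorem hasDWalk_zero {A : V → V → Prop} {x y : V} : HasDWalk A x y 0 ↔ x = y :=
  ⟨fun ⟨_, hx, hy, _⟩ => hx ▸ hy ▸ rfl, fun h => ⟨fun _ => x, rfl, h, Fin.elim0⟩⟩

theorem hasDWalk_succ {A : V → V → Prop} {x y : V} {m : ℕ} :
    HasDWalk A x y (m + 1) ↔ ∃ u, A x u ∧ HasDWalk A u y m := by
  constructor
  · rintro ⟨f, hx, hy, hf⟩
    refine ⟨f 1, hx ▸ hf 0, Fin.tail f, rfl, hy, fun i => ?_⟩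
    simpa only [Fin.tail, Fin.succ_castSucc] using hf i.succ
  · rintro ⟨u, hxu, g, hu, hy, hg⟩
    refine ⟨Fin.cons x g, rfl, by rwa [← Fin.succ_last, Fin.cons_succ], fun i => ?_⟩
    cases i using Fin.cases with
    | zero => simpa [hu] using hxu
    | succ j => simpa only [Fin.castSucc_succ, Fin.cons_succ] using hg j

theorem HasDWalk.exists_le_of_isModule {A : V → V → Prop} {X : Set V} (hX : IsModule A X)
    {w x y : V} {m : ℕ} (hw : w ∉ X) (hx : x ∈ X) (hy : y ∈ X) (h : HasDWalk A w x m) :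
    ∃ j ≤ m, HasDWalk A w y j := by
  induction m generalizing w with
  | zero => exact absurd (hasDWalk_zero.1 h ▸ hx) hw
  | succ m ih =>
    obtain ⟨u, hwu, hu⟩ := hasDWalk_succ.1 h
    by_cases huX : u ∈ X
    · have hwy : A w y := ((hX w hw u huX y hy).1).1 hwu
      exact ⟨1, by omega, hasDWalk_succ.2 ⟨y, hwy, hasDWalk_zero.2 rfl⟩⟩
    · obtain ⟨j, hjm, hj⟩ := ih huX hu
      exact ⟨j + 1, by omega, hasDWalk_succ.2 ⟨u, hwu, hj⟩⟩

theorem ddist_le_of_hasDWalk {A : V → V → Prop} {x y : V} {m : ℕ} (h : HasDWalk A x y m) :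
    ddist A x y ≤ m :=
  sInf_le ⟨m, rfl, h⟩

theorem le_ddist_of_forall_hasDWalk {A : V → V → Prop} {x y : V} {n : ℕ∞}
    (h : ∀ m, HasDWalk A x y m → n ≤ m) : n ≤ ddist A x y :=
  le_sInf fun _ ⟨m, hnm, hm⟩ => hnm ▸ h m hm

theorem IsModule.ddist_eq {A : V → V → Prop} {X : Set V} (hX : IsModule A X)
    {w x y : V} (hw : w ∉ X) (hx : x ∈ X) (hy : y ∈ X) : ddist A w x = ddist A w y := by
  have key : ∀ {a b}, a ∈ X → b ∈ X → ddist A w b ≤ ddist A w a := fun ha hb =>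
    le_ddist_of_forall_hasDWalk fun m hm =>
      let ⟨j, hjm, hj⟩ := hm.exists_le_of_isModule hX hw ha hb
      (ddist_le_of_hasDWalk hj).trans (by exact_mod_cast hjm)
  exact le_antisymm (key hy hx) (key hx hy)

theorem IsResolvingSet.exists_mem_inter_ddist_ne {A : V → V → Prop} {W X : Set V}
    (hW : IsResolvingSet A W) (hX : IsModule A X) {x y : V} (hx : x ∈ X) (hy : y ∈ X)
    (hxy : x ≠ y) : ∃ w ∈ W ∩ X, ddist A w x ≠ ddist A w y := by
  obtain ⟨w, hwW, hw⟩ := hW.2 x y hxy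
  exact ⟨w, ⟨hwW, by_contra fun hwX => hw (hX.ddist_eq hwX hx hy)⟩, hw⟩

/-- a resolving set resolves each nontrivial module locally; in
particular it meets each nontrivial module. -/
theorem resolving_set_resolves_module_locally {ι : Type*}
    (A : V → V → Prop) (X : ι → Set V) (hX : IsFactorization A X)
    (W : Set V) (hW : IsResolvingSet A W)
    (i : ι) (hnt : ∃ a ∈ X i, ∃ b ∈ X i, a ≠ b) :
    (∀ x ∈ X i, ∀ y ∈ X i, x ≠ y →
      ∃ w ∈ W ∩ X i, ddist A w x ≠ ddist A w y) ∧ (W ∩ X i).Nonempty := by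
  have hres := fun x (hx : x ∈ X i) y (hy : y ∈ X i) hxy =>
    hW.exists_mem_inter_ddist_ne (hX.2.2.2 i) hx hy hxy
  obtain ⟨a, ha, b, hb, hab⟩ := hnt
  obtain ⟨w, hw, -⟩ := hres a ha b hb hab
  exact ⟨hres, w, hw⟩
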